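/- Let X, Y ⊆ ℤ₂^α × ℤ₄^β be ℤ₂ℤ₄-additive codes of types (α,β;γ',δ') and (α,β;γ'',δ''), with minimum Lee distances 2^{m−r−1} and 2^{m−r} respectively and binary lengths α+2β = 2^{m−1}. Then the Plotkin construction C = {(u,u+v): u∈X, v∈Y} is of type (2α,2β;γ'+γ'',δ'+δ''), has binary length 2^m, and minimum Lee distance exactly 2^{m−r}. -/

import Mathlib

open Finset

/-- The Gray map `φ : ℤ₄ → ℤ₂²`. -/
def grayMap (x : ZMod 4) : ZMod 2 × ZMod 2 :=
  if x = 0 then (0, 0) else if x = 1 then (0, 1) else if x = 2 then (1, 1) else (1, 0)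

/-- Lee weight on `ℤ₄`: `wL(0)=0, wL(1)=1, wL(2)=2, wL(3)=1`. -/
def leeWt4 (x : ZMod 4) : ℕ := min x.val (4 - x.val)

/-- Hamming distance on `ℤ₂²`. -/
def hamDist2 (x y : ZMod 2 × ZMod 2) : ℕ :=
  (if x.1 = y.1 then 0 else 1) + (if x.2 = y.2 then 0 else 1)

/-- The ambient space `ℤ₂^a × ℤ₄^b`. -/
abbrev Vec (a b : ℕ) := (Fin a → ZMod 2) × (Fin b → ZMod 4)

/-- Hamming weight of a binary vector. -/
def wtH {n : ℕ} (f : Fin n → ZMod 2) : ℕ := (univ.filter fun i => f i ≠ 0).card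

/-- Lee weight on `ℤ₂^a × ℤ₄^b`. -/
def leeWt {a b : ℕ} (w : Vec a b) : ℕ := wtH w.1 + ∑ j, leeWt4 (w.2 j)

/-- Lee distance on `ℤ₂^a × ℤ₄^b`. -/
def leeDist {a b : ℕ} (x y : Vec a b) : ℕ := leeWt (x - y)

/-- Minimum Lee distance (= minimum Lee weight of a nonzero element) of a set. -/
noncomputable def minLee {a b : ℕ} (S : Set (Vec a b)) : ℕ := sInf (leeWt '' (S \ {0}))

/-- Minimum Hamming distance of a (not necessarily linear) binary code. -/
noncomputable def minHam {n : ℕ} (S : Set (Fin n → ZMod 2)) : ℕ :=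
  sInf {d | ∃ x ∈ S, ∃ y ∈ S, x ≠ y ∧ hammingDist x y = d}

/-- The extended Gray map `Φ : ℤ₂^a × ℤ₄^b → ℤ₂^(a+2b)`. -/
def Phi {a b : ℕ} (x : Vec a b) : Fin (a + 2 * b) → ZMod 2 :=
  fun i =>
    if h : (i : ℕ) < a then x.1 ⟨i, h⟩
    else
      have hb : ((i : ℕ) - a) / 2 < b := by have := i.isLt; omega
      if ((i : ℕ) - a) % 2 = 0 then (grayMap (x.2 ⟨((i : ℕ) - a) / 2, hb⟩)).1
      else (grayMap (x.2 ⟨((i : ℕ) - a) / 2, hb⟩)).2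

/-- The Plotkin vector `(u , u + v)` in `ℤ₂^(2a) × ℤ₄^(2b)`. -/
def plVec {a b : ℕ} (u v : Vec a b) : Vec (a + a) (b + b) :=
  (Fin.append u.1 (u.1 + v.1), Fin.append u.2 (u.2 + v.2))

/-- The Plotkin construction `{(u, u+v) : u ∈ X, v ∈ Y}`. -/
def plotkinSet {a b : ℕ} (X Y : Set (Vec a b)) : Set (Vec (a + a) (b + b)) :=
  {w | ∃ u ∈ X, ∃ v ∈ Y, w = plVec u v}

/-!
The Plotkin map `(u, v) ↦ (u, u + v)` is an additive isomorphism `X × Y ≃+ C`, which gives the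
type of `C`. The Lee weight of `(u, u + v)` is `wL(u) + wL(u + v)`: for `v = 0` this is
`2 wL(u) ≥ 2 d(X)`, and otherwise it is at least `wL(v) ≥ d(Y)` by the triangle inequality.
The words `(u, u)` and `(0, v)` attain these bounds, so `d(C) = min (2 d(X)) d(Y) = 2^(m-r)`.
-/

lemma leeWt4_sub_le : ∀ x y : ZMod 4, leeWt4 (x - y) ≤ leeWt4 x + leeWt4 y := by decide

lemma wtH_append {m n : ℕ} (f : Fin m → ZMod 2) (g : Fin n → ZMod 2) :
    wtH (Fin.append f g) = wtH f + wtH g := by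
  simp only [wtH, Finset.card_filter, Fin.sum_univ_add, Fin.append_left, Fin.append_right]

section LeeWeight

variable {a b : ℕ}

lemma leeWt_zero : leeWt (0 : Vec a b) = 0 := by
  simp [leeWt, wtH, leeWt4]

lemma leeWt_sub_le (x y : Vec a b) : leeWt (x - y) ≤ leeWt x + leeWt y := by
  have hbin : wtH (x - y).1 ≤ wtH x.1 + wtH y.1 := by
    change hammingNorm (x.1 - y.1) ≤ hammingNorm x.1 + hammingNorm y.1
    rw [sub_eq_neg_add, ← hammingDist_eq_hammingNorm, ← hammingDist_zero_left, add_comm]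
    exact hammingDist_triangle_left _ _ 0
  have hquat : ∑ j, leeWt4 ((x - y).2 j) ≤ ∑ j, leeWt4 (x.2 j) + ∑ j, leeWt4 (y.2 j) := by
    rw [← Finset.sum_add_distrib]
    exact Finset.sum_le_sum fun j _ => leeWt4_sub_le _ _
  unfold leeWt
  omega

lemma leeWt_plVec (u v : Vec a b) : leeWt (plVec u v) = leeWt u + leeWt (u + v) := by
  simp only [leeWt, plVec, wtH_append, Fin.sum_univ_add, Fin.append_left, Fin.append_right,
    Prod.fst_add, Prod.snd_add]
  omega

lemma minLee_le {S : Set (Vec a b)} {w : Vec a b} (hw : w ∈ S) (hw0 : w ≠ 0) :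
    minLee S ≤ leeWt w :=
  Nat.sInf_le ⟨w, ⟨hw, hw0⟩, rfl⟩

lemma le_minLee {S : Set (Vec a b)} {d : ℕ} (hS : (S \ {0}).Nonempty)
    (h : ∀ w ∈ S, w ≠ 0 → d ≤ leeWt w) : d ≤ minLee S := by
  refine le_csInf (hS.image leeWt) ?_
  rintro _ ⟨w, ⟨hw, hw0⟩, rfl⟩
  exact h w hw hw0

lemma exists_leeWt_eq_minLee {S : Set (Vec a b)} (hS : (S \ {0}).Nonempty) :
    ∃ w ∈ S, w ≠ 0 ∧ leeWt w = minLee S := by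
  obtain ⟨w, ⟨hw, hw0⟩, hwt⟩ := Nat.sInf_mem (hS.image leeWt)
  exact ⟨w, hw, hw0, hwt⟩

lemma nonempty_diff_zero_of_minLee_ne_zero {S : Set (Vec a b)} (h : minLee S ≠ 0) :
    (S \ {0}).Nonempty := by
  by_contra hS
  rw [Set.not_nonempty_iff_eq_empty] at hS
  exact h (by rw [minLee, hS, Set.image_empty, Nat.sInf_empty])

end LeeWeight

def appendAddEquiv (m n : ℕ) (M : Type*) [Add M] :
    ((Fin m → M) × (Fin n → M)) ≃+ (Fin (m + n) → M) :=
  { Fin.appendEquiv m n with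
    map_add' := fun p q => by
      funext i
      induction i using Fin.addCases <;> simp }

def vecAppendEquiv (a b c d : ℕ) : (Vec a b × Vec c d) ≃+ Vec (a + c) (b + d) :=
  (AddEquiv.prodProdProdComm _ _ _ _).trans
    ((appendAddEquiv a c (ZMod 2)).prodCongr (appendAddEquiv b d (ZMod 4)))

def shearAddEquiv (G : Type*) [AddCommGroup G] : (G × G) ≃+ (G × G) where
  toFun p := (p.1, p.1 + p.2)
  invFun p := (p.1, p.2 - p.1)
  left_inv p := by simp
  right_inv p := by simp
  map_add' p q := Prod.ext rfl (add_add_add_comm _ _ _ _)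

def plotkinEquiv (a b : ℕ) : (Vec a b × Vec a b) ≃+ Vec (a + a) (b + b) :=
  (shearAddEquiv (Vec a b)).trans (vecAppendEquiv a b a b)

section Plotkin

variable {a b : ℕ}

lemma plotkinEquiv_apply (u v : Vec a b) : plotkinEquiv a b (u, v) = plVec u v := rfl

lemma plVec_eq_zero_iff {u v : Vec a b} : plVec u v = 0 ↔ u = 0 ∧ v = 0 := by
  rw [← plotkinEquiv_apply, map_eq_zero_iff _ (plotkinEquiv a b).injective, Prod.mk_eq_zero]

theorem minLee_plotkinSet {X Y : Set (Vec a b)} (hX0 : 0 ∈ X) (hY0 : 0 ∈ Y)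
    (hX : (X \ {0}).Nonempty) (hY : (Y \ {0}).Nonempty) :
    minLee (plotkinSet X Y) = min (2 * minLee X) (minLee Y) := by
  apply le_antisymm
  · obtain ⟨u, hu, hu0, hwu⟩ := exists_leeWt_eq_minLee hX
    obtain ⟨v, hv, hv0, hwv⟩ := exists_leeWt_eq_minLee hY
    refine le_min ?_ ?_
    · have h := minLee_le (show plVec u 0 ∈ plotkinSet X Y from ⟨u, hu, 0, hY0, rfl⟩)
        (by simp [plVec_eq_zero_iff, hu0])
      rw [leeWt_plVec, add_zero, hwu] at h
      omega
    · have h := minLee_le (show plVec 0 v ∈ plotkinSet X Y from ⟨0, hX0, v, hv, rfl⟩)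
        (by simp [plVec_eq_zero_iff, hv0])
      rwa [leeWt_plVec, zero_add, hwv, leeWt_zero, zero_add] at h
  · refine le_minLee ?_ ?_
    · obtain ⟨v, hv, hv0⟩ := hY
      exact ⟨plVec 0 v, ⟨0, hX0, v, hv, rfl⟩, by simpa [plVec_eq_zero_iff] using hv0⟩
    rintro _ ⟨u, hu, v, hv, rfl⟩ hw0
    rw [leeWt_plVec]
    by_cases hv0 : v = 0
    · subst hv0
      have hu0 : u ≠ 0 := by simpa [plVec_eq_zero_iff] using hw0
      have := minLee_le hu hu0
      rw [add_zero]
      omega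
    · have hv_le : leeWt v ≤ leeWt (u + v) + leeWt u := by
        simpa using leeWt_sub_le (u + v) u
      have := minLee_le hv hv0
      omega

def plotkinSubgroup (X Y : AddSubgroup (Vec a b)) : AddSubgroup (Vec (a + a) (b + b)) :=
  (X.prod Y).map (plotkinEquiv a b).toAddMonoidHom

lemma coe_plotkinSubgroup (X Y : AddSubgroup (Vec a b)) :
    (plotkinSubgroup X Y : Set (Vec (a + a) (b + b))) = plotkinSet X Y := by
  ext w
  rw [plotkinSubgroup, AddSubgroup.coe_map]
  constructor
  · rintro ⟨⟨u, v⟩, ⟨hu, hv⟩, rfl⟩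
    exact ⟨u, hu, v, hv, rfl⟩
  · rintro ⟨u, hu, v, hv, rfl⟩
    exact ⟨(u, v), ⟨hu, hv⟩, rfl⟩

def plotkinSubgroupEquiv (X Y : AddSubgroup (Vec a b)) : plotkinSubgroup X Y ≃+ X × Y :=
  ((plotkinEquiv a b).addSubgroupMap (X.prod Y)).symm.trans (AddSubgroup.prodEquiv X Y)

end Plotkin

/-- Plotkin step of the `ARM` recursion. If `X, Y ⊆ ℤ₂^α × ℤ₄^β` have
types `(α,β;γ',δ')`, `(α,β;γ'',δ'')`, minimum Lee distances `2^(m−r−1)` and `2^(m−r)`,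
and binary length `α+2β = 2^(m−1)`, then the Plotkin code is of type
`(2α,2β;γ'+γ'',δ'+δ'')`, has binary length `2^m`, and minimum Lee distance `2^(m−r)`. -/
theorem plotkin_RM_step (α β γ' δ' γ'' δ'' m r : ℕ) (hr : r < m)
    (X Y : AddSubgroup (Vec α β))
    (hX : Nonempty (X ≃+ Vec γ' δ')) (hY : Nonempty (Y ≃+ Vec γ'' δ''))
    (hdX : minLee (X : Set (Vec α β)) = 2 ^ (m - r - 1))
    (hdY : minLee (Y : Set (Vec α β)) = 2 ^ (m - r))
    (hlen : α + 2 * β = 2 ^ (m - 1)) :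
    ∃ C : AddSubgroup (Vec (α + α) (β + β)),
      (C : Set (Vec (α + α) (β + β))) = plotkinSet (X : Set (Vec α β)) (Y : Set (Vec α β)) ∧
      Nonempty (C ≃+ Vec (γ' + γ'') (δ' + δ'')) ∧
      (α + α) + 2 * (β + β) = 2 ^ m ∧
      minLee (plotkinSet (X : Set (Vec α β)) (Y : Set (Vec α β))) = 2 ^ (m - r) := by
  refine ⟨plotkinSubgroup X Y, coe_plotkinSubgroup X Y,
    ⟨(plotkinSubgroupEquiv X Y).trans
      ((hX.some.prodCongr hY.some).trans (vecAppendEquiv γ' δ' γ'' δ''))⟩, ?_, ?_⟩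
  · calc (α + α) + 2 * (β + β) = 2 * (α + 2 * β) := by ring
      _ = 2 ^ m := by rw [hlen, ← pow_succ', Nat.sub_add_cancel (by omega)]
  · have hX0 := nonempty_diff_zero_of_minLee_ne_zero (hdX ▸ pow_ne_zero _ two_ne_zero)
    have hY0 := nonempty_diff_zero_of_minLee_ne_zero (hdY ▸ pow_ne_zero _ two_ne_zero)
    rw [minLee_plotkinSet X.zero_mem Y.zero_mem hX0 hY0, hdX, hdY, ← pow_succ',
      Nat.sub_add_cancel (by omega), min_self]
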